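/- arXiv:2506.06592 — 6 statements merged into one kernel-verified Lean document; each statement's English description precedes it below -/
import Mathlib

section
/- Let k be a field of characteristic ≠ 3 and let f(x,y_1,...,y_n) = x^3 + a·x + b be an irreducible polynomial with a, b ∈ k[y_1,...,y_n]. Set K := k(y_1,...,y_n) and L := Frac(k[x,y_1,...,y_n]/(f)). Suppose there is a nontrivial K-algebra automorphism g of L with g(x) = A·x + B, where A ∈ k satisfies A ≠ 1 and A^3 = 1, and B ∈ k[y_1,...,y_n]. Then a = 0 and B = 0. -/
/-! If `x` and `αx + β` (with `α³ = 1`) are both roots of `X³ + aX + b`, subtracting the two cubic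
equations leaves the quadratic relation `3α²β x² + (3αβ² + (α - 1)a) x + (β³ + aβ) = 0` over `K`.
By Gauss's lemma `x` has degree three over `K`, so every coefficient vanishes: `3α²β = 0` forces
`β = 0`, and then `(α - 1)a = 0` forces `a = 0`. -/

noncomputable section

open MvPolynomial

/-- The rational function field `K = k(y₁, …, yₙ)`. -/
abbrev RatFF (k : Type*) [Field k] (n : ℕ) : Type _ :=
  FractionRing (MvPolynomial (Fin n) k)

theorem Ring.three_ne_zero {R : Type*} [NonAssocSemiring R] [Nontrivial R]
    (hR : ringChar R ≠ 3) : (3 : R) ≠ 0 := fun h =>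
  hR (CharP.ringChar_of_prime_eq_zero Nat.prime_three (by exact_mod_cast h))

namespace Polynomial

theorem minpoly_eq_map_of_monic_of_irreducible {R K L : Type*} [CommRing R] [IsDomain R]
    [IsIntegrallyClosed R] [Field K] [Algebra R K] [IsFractionRing R K] [Ring L] [Nontrivial L]
    [Algebra K L] {f : R[X]} (hmon : f.Monic) (hirr : Irreducible f) {x : L}
    (hx : aeval x (f.map (algebraMap R K)) = 0) :
    minpoly K x = f.map (algebraMap R K) :=
  (minpoly.eq_of_irreducible_of_monic
    (hmon.irreducible_iff_irreducible_map_fraction_map.mp hirr) hx (hmon.map _)).symm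

theorem coeffs_eq_zero_of_quadratic_eq_zero {K L : Type*} [Field K] [Ring L] [Algebra K L]
    {x : L} (hx : 2 < (minpoly K x).natDegree) {c₀ c₁ c₂ : K}
    (h : algebraMap K L c₂ * x ^ 2 + algebraMap K L c₁ * x + algebraMap K L c₀ = 0) :
    c₂ = 0 ∧ c₁ = 0 ∧ c₀ = 0 := by
  set q : K[X] := C c₂ * X ^ 2 + C c₁ * X + C c₀
  have hq : q = 0 := by
    by_contra hq
    have hle := minpoly.degree_le_of_ne_zero K x hq (by simpa [q] using h)
    have : (minpoly K x).natDegree ≤ 2 :=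
      (natDegree_le_natDegree hle).trans natDegree_quadratic_le
    omega
  refine ⟨?_, ?_, ?_⟩
  · simpa [q] using congrArg (coeff · 2) hq
  · simpa [q] using congrArg (coeff · 1) hq
  · simpa [q] using congrArg (coeff · 0) hq

theorem eq_zero_of_cubic_root_of_affine_root {K L : Type*} [Field K] [CommRing L] [Algebra K L]
    {x : L} (hx : 2 < (minpoly K x).natDegree) (h3 : (3 : K) ≠ 0) {a b α β : K}
    (hα : α ^ 3 = 1) (hα1 : α ≠ 1)
    (hroot : aeval x (X ^ 3 + C a * X + C b) = 0)
    (hroot' : aeval (algebraMap K L α * x + algebraMap K L β) (X ^ 3 + C a * X + C b) = 0) :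
    a = 0 ∧ β = 0 := by
  simp only [map_add, map_mul, map_pow, aeval_X, aeval_C] at hroot hroot'
  have hαL : algebraMap K L α ^ 3 = 1 := by rw [← map_pow, hα, map_one]
  obtain ⟨hβ, ha, -⟩ := coeffs_eq_zero_of_quadratic_eq_zero hx
    (c₂ := 3 * α ^ 2 * β) (c₁ := 3 * α * β ^ 2 + (α - 1) * a) (c₀ := β ^ 3 + a * β) (by
      simp only [map_add, map_mul, map_pow, map_sub, map_one, map_ofNat]
      linear_combination hroot' - hroot - x ^ 3 * hαL)
  have hα0 : α ≠ 0 := by rintro rfl; norm_num at hα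
  have hβ0 : β = 0 := by simpa [h3, hα0] using hβ
  refine ⟨?_, hβ0⟩
  simpa [hβ0, sub_eq_zero, hα1] using ha

end Polynomial

open Polynomial

theorem cubic_aut_char_ne_three_general
    {k : Type*} [Field k] (hch : ringChar k ≠ 3) {n : ℕ}
    (a b : MvPolynomial (Fin n) k)
    (f : Polynomial (MvPolynomial (Fin n) k))
    (hf : f = Polynomial.X ^ 3 + Polynomial.C a * Polynomial.X + Polynomial.C b)
    (hirr : Irreducible f)
    (L : Type*) [Field L] [Algebra (RatFF k n) L] (x : L)
    (hroot : Polynomial.aeval x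
      (f.map (algebraMap (MvPolynomial (Fin n) k) (RatFF k n))) = 0)
    (g : L ≃ₐ[RatFF k n] L)
    (A : k) (hA1 : A ≠ 1) (hA3 : A ^ 3 = 1)
    (B : MvPolynomial (Fin n) k)
    (hgx : g x = algebraMap (RatFF k n) L
        (algebraMap (MvPolynomial (Fin n) k) (RatFF k n) (MvPolynomial.C A)) * x +
      algebraMap (RatFF k n) L
        (algebraMap (MvPolynomial (Fin n) k) (RatFF k n) B)) :
    a = 0 ∧ B = 0 := by
  set ψ := algebraMap (MvPolynomial (Fin n) k) (RatFF k n)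
  have hψ : Function.Injective ψ := IsFractionRing.injective _ _
  have hψC : Function.Injective (ψ.comp C) := hψ.comp (C_injective _ _)
  have hmon : f.Monic := by rw [hf]; monicity!
  have hdeg : (minpoly (RatFF k n) x).natDegree = 3 := by
    rw [minpoly_eq_map_of_monic_of_irreducible hmon hirr hroot, hmon.natDegree_map, hf]
    compute_degree!
  have hfψ : f.map ψ =
      Polynomial.X ^ 3 + Polynomial.C (ψ a) * Polynomial.X + Polynomial.C (ψ b) := by
    simp [hf]
  have h3 : (3 : RatFF k n) ≠ 0 := by
    have := hψC.ne (Ring.three_ne_zero hch)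
    rwa [map_ofNat, map_zero] at this
  have hroot' : aeval (g x) (f.map ψ) = 0 := by rw [aeval_algHom_apply, hroot, map_zero]
  rw [hfψ] at hroot hroot'
  rw [hgx] at hroot'
  obtain ⟨ha, hB⟩ := eq_zero_of_cubic_root_of_affine_root (by omega) h3
    (by simpa using congrArg (ψ.comp C) hA3) (by simpa using hψC.ne hA1) hroot hroot'
  exact ⟨hψ (by simpa using ha), hψ (by simpa using hB)⟩

/-- **Lemma (cubic, characteristic ≠ 3).** -/
theorem cubic_aut_char_ne_three
    {k : Type*} [Field k] (hch : ringChar k ≠ 3) {n : ℕ}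
    (a b : MvPolynomial (Fin n) k)
    (f : Polynomial (MvPolynomial (Fin n) k))
    (hf : f = Polynomial.X ^ 3 + Polynomial.C a * Polynomial.X + Polynomial.C b)
    (hirr : Irreducible f)
    (L : Type*) [Field L] [Algebra (RatFF k n) L] (x : L)
    (hroot : Polynomial.aeval x
      (f.map (algebraMap (MvPolynomial (Fin n) k) (RatFF k n))) = 0)
    (hgen : IntermediateField.adjoin (RatFF k n) {x} = ⊤)
    (g : L ≃ₐ[RatFF k n] L) (hg : g ≠ AlgEquiv.refl)
    (A : k) (hA1 : A ≠ 1) (hA3 : A ^ 3 = 1)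
    (B : MvPolynomial (Fin n) k)
    (hgx : g x = algebraMap (RatFF k n) L
        (algebraMap (MvPolynomial (Fin n) k) (RatFF k n) (MvPolynomial.C A)) * x +
      algebraMap (RatFF k n) L
        (algebraMap (MvPolynomial (Fin n) k) (RatFF k n) B)) :
    a = 0 ∧ B = 0 :=
  cubic_aut_char_ne_three_general hch a b f hf hirr L x hroot g A hA1 hA3 B hgx
end
end

section
/- Let k be an algebraically closed field of characteristic 3 and let f(x,y_1,...,y_n) = x^3 + a_2·x + a_3 be an irreducible polynomial with a_2, a_3 ∈ k[y_1,...,y_n], a_2 ≠ 0, and deg(a_2) ≤ 3. Set K := k(y_1,...,y_n) and L := Frac(k[x,y_1,...,y_n]/(f)). If L/K is a Galois extension, then there exists a polynomial B ∈ k[y_1,...,y_n] with a_2 = -B^2. -/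
/-! If `x` and `σ x` are distinct roots of `X ^ 3 + a₂ X + a₃`, then in characteristic 3
the difference `r = σ x - x` satisfies `r ^ 3 + a₂ r = 0`, hence `r ^ 2 = -a₂`. Since
`[L : K] = 3` is odd, `r` lies in `K`, and since `k[y₁, …, yₙ]` is integrally closed, it even
lies in `k[y₁, …, yₙ]`. -/

noncomputable section

open MvPolynomial

open Module Polynomial

theorem sub_sq_eq_neg_of_depressed_cubic_roots {L : Type*} [CommRing L] [IsDomain L]
    [CharP L 3] {a b x y : L} (hx : x ^ 3 + a * x + b = 0) (hy : y ^ 3 + a * y + b = 0)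
    (hxy : x ≠ y) : (y - x) ^ 2 = -a := by
  have : Fact (Nat.Prime 3) := ⟨Nat.prime_three⟩
  have hcube : (y - x) ^ 3 = y ^ 3 - x ^ 3 := sub_pow_char y x
  have hprod : (y - x) * ((y - x) ^ 2 + a) = 0 := by
    linear_combination hcube + hy - hx
  linear_combination (mul_eq_zero.mp hprod).resolve_left (sub_ne_zero.mpr hxy.symm)

section FieldExtension

variable {K L : Type*} [Field K] [Field L] [Algebra K L]

theorem finrank_eq_natDegree_minpoly_of_adjoin_eq_top {x : L} (hx : IsIntegral K x)
    (hgen : IntermediateField.adjoin K {x} = ⊤) : finrank K L = (minpoly K x).natDegree := by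
  rw [← IntermediateField.adjoin.finrank hx, hgen, IntermediateField.finrank_top']

theorem mem_range_algebraMap_of_sq_mem_of_odd_finrank (hodd : Odd (finrank K L)) {r : L} {c : K}
    (hr : r ^ 2 = algebraMap K L c) : r ∈ (algebraMap K L).range := by
  have : FiniteDimensional K L := Module.finite_of_finrank_pos hodd.pos
  have hr' : aeval r (Polynomial.X ^ 2 - Polynomial.C c) = 0 := by simp [hr]
  have hdeg_le : (minpoly K r).natDegree ≤ 2 :=
    (natDegree_le_of_dvd (minpoly.dvd K r hr') (X_pow_sub_C_ne_zero two_pos c)).trans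
      natDegree_X_pow_sub_C.le
  obtain ⟨m, hm⟩ : Odd (minpoly K r).natDegree :=
    hodd.of_dvd_nat (minpoly.degree_dvd (IsIntegral.of_finite K r))
  rw [← minpoly.natDegree_eq_one_iff]
  omega

theorem IsGalois.exists_algEquiv_apply_ne [IsGalois K L] {x : L}
    (hx : x ∉ (algebraMap K L).range) : ∃ σ : L ≃ₐ[K] L, σ x ≠ x := by
  by_contra! h
  exact hx ((InfiniteGalois.mem_range_algebraMap_iff_fixed x).mpr h)

theorem exists_sq_eq_neg_of_isGalois_of_adjoin_root_cubic [CharP K 3] [IsGalois K L] {a b : K}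
    (hirr : Irreducible (Polynomial.X ^ 3 + Polynomial.C a * Polynomial.X + Polynomial.C b))
    {x : L} (hx : aeval x (Polynomial.X ^ 3 + Polynomial.C a * Polynomial.X + Polynomial.C b) = 0)
    (hgen : IntermediateField.adjoin K {x} = ⊤) : ∃ c : K, c ^ 2 = -a := by
  set p : K[X] := Polynomial.X ^ 3 + Polynomial.C a * Polynomial.X + Polynomial.C b with hp
  have : CharP L 3 := charP_of_injective_algebraMap (algebraMap K L).injective 3
  have hdeg : p.natDegree = 3 := by rw [hp]; compute_degree!
  have hmonic : p.Monic := by rw [hp]; monicity!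
  have hmin : minpoly K x = p := (minpoly.eq_of_irreducible_of_monic hirr hx hmonic).symm
  have hfinrank : finrank K L = 3 := by
    rw [finrank_eq_natDegree_minpoly_of_adjoin_eq_top ⟨p, hmonic, hx⟩ hgen, hmin, hdeg]
  have hcubic : ∀ z : L, aeval z p = 0 →
      z ^ 3 + algebraMap K L a * z + algebraMap K L b = 0 := by
    intro z hz
    simpa [hp, Algebra.smul_def] using hz
  obtain ⟨σ, hσ⟩ := IsGalois.exists_algEquiv_apply_ne (K := K) (x := x) (by
    rw [← minpoly.natDegree_eq_one_iff, hmin, hdeg]; norm_num)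
  have hσx : aeval (σ x) p = 0 := by rw [aeval_algEquiv, AlgHom.comp_apply, hx, map_zero]
  have hsq := sub_sq_eq_neg_of_depressed_cubic_roots (hcubic x hx) (hcubic _ hσx) hσ.symm
  obtain ⟨c, hc⟩ := mem_range_algebraMap_of_sq_mem_of_odd_finrank (by rw [hfinrank]; decide)
    (hsq.trans (map_neg (algebraMap K L) a).symm)
  refine ⟨c, (algebraMap K L).injective ?_⟩
  rw [map_pow, hc, hsq, map_neg]

end FieldExtension

theorem cubic_galois_char_three_general
    {k : Type*} [Field k] [CharP k 3] {n : ℕ}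
    (a₂ a₃ : MvPolynomial (Fin n) k)
    (f : Polynomial (MvPolynomial (Fin n) k))
    (hf : f = Polynomial.X ^ 3 + Polynomial.C a₂ * Polynomial.X + Polynomial.C a₃)
    (hirr : Irreducible f)
    (L : Type*) [Field L] [Algebra (RatFF k n) L] (x : L)
    (hroot : Polynomial.aeval x
      (f.map (algebraMap (MvPolynomial (Fin n) k) (RatFF k n))) = 0)
    (hgen : IntermediateField.adjoin (RatFF k n) {x} = ⊤)
    (hGal : IsGalois (RatFF k n) L) :
    ∃ B : MvPolynomial (Fin n) k, a₂ = -B ^ 2 := by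
  have : CharP (RatFF k n) 3 := charP_of_injective_algebraMap
    (IsFractionRing.injective (MvPolynomial (Fin n) k) _) 3
  have hmap : f.map (algebraMap (MvPolynomial (Fin n) k) (RatFF k n)) =
      Polynomial.X ^ 3 + Polynomial.C (algebraMap _ _ a₂) * Polynomial.X +
        Polynomial.C (algebraMap _ _ a₃) := by
    simp [hf]
  have hmonic : f.Monic := by rw [hf]; monicity!
  obtain ⟨c, hc⟩ := exists_sq_eq_neg_of_isGalois_of_adjoin_root_cubic
    (hmap ▸ hmonic.irreducible_iff_irreducible_map_fraction_map.mp hirr) (hmap ▸ hroot) hgen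
  obtain ⟨B, hB⟩ := IsIntegrallyClosed.exists_algebraMap_eq_of_isIntegral_pow two_pos
    (hc ▸ (map_neg (algebraMap _ (RatFF k n)) a₂).symm ▸ isIntegral_algebraMap :
      IsIntegral (MvPolynomial (Fin n) k) (c ^ 2))
  refine ⟨B, neg_eq_iff_eq_neg.mp (IsFractionRing.injective _ (RatFF k n) ?_)⟩
  rw [map_neg, map_pow, hB, hc]

/-- **Lemma (cubic Galois extensions in characteristic 3).** -/
theorem cubic_galois_char_three
    {k : Type*} [Field k] [IsAlgClosed k] [CharP k 3] {n : ℕ}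
    (a₂ a₃ : MvPolynomial (Fin n) k)
    (ha₂ : a₂ ≠ 0) (hdeg : a₂.totalDegree ≤ 3)
    (f : Polynomial (MvPolynomial (Fin n) k))
    (hf : f = Polynomial.X ^ 3 + Polynomial.C a₂ * Polynomial.X + Polynomial.C a₃)
    (hirr : Irreducible f)
    (L : Type*) [Field L] [Algebra (RatFF k n) L] (x : L)
    (hroot : Polynomial.aeval x
      (f.map (algebraMap (MvPolynomial (Fin n) k) (RatFF k n))) = 0)
    (hgen : IntermediateField.adjoin (RatFF k n) {x} = ⊤)
    (hGal : IsGalois (RatFF k n) L) :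
    ∃ B : MvPolynomial (Fin n) k, a₂ = -B ^ 2 :=
  cubic_galois_char_three_general a₂ a₃ f hf hirr L x hroot hgen hGal
end
end

section
/- Let k be a field of characteristic ≠ 2 and let f(x,y_1,...,y_n) = x^4 + a·x^2 + b·x + c be an irreducible polynomial with a, b, c ∈ k[y_1,...,y_n]. Set K := k(y_1,...,y_n) and L := Frac(k[x,y_1,...,y_n]/(f)). Suppose there is a nontrivial K-algebra automorphism g of L with g(x) = A·x + B, where A ∈ k satisfies A^2 ≠ 1 and A^4 = 1, and B ∈ k[y_1,...,y_n]. Then B = 0, a = 0, and b = 0. -/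
/-!
Since `g` fixes `K`, `g x = A x + B` is another root of the minimal polynomial `F` of `x`, which
is the image of the monic irreducible `f` over `K` (Gauss). Hence `F` divides `F(A X + B)`; both
are monic of degree 4 because `A ^ 4 = 1`, so `F(A X + B) = F`. Comparing the coefficients of
`X ^ 3`, `X ^ 2` and `X` gives `4 A ^ 3 B = 0`, `a (A ^ 2 - 1) = 0` and `b (A - 1) = 0`.
-/

noncomputable section

open MvPolynomial

namespace Polynomial

theorem minpoly_comp_affine_eq_self {K L : Type*} [Field K] [CommRing L] [Nontrivial L]
    [Algebra K L] {x : L} (hx : IsIntegral K x) {α β : K}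
    (hα : α ^ (minpoly K x).natDegree = 1)
    (hroot : aeval (algebraMap K L α * x + algebraMap K L β) (minpoly K x) = 0) :
    (minpoly K x).comp (C α * X + C β) = minpoly K x := by
  have hdeg : 0 < (minpoly K x).natDegree := minpoly.natDegree_pos hx
  have hα0 : α ≠ 0 := by
    rintro rfl
    simp [zero_pow hdeg.ne'] at hα
  have hlin : (C α * X + C β).natDegree = 1 := by compute_degree!
  have hmonic : ((minpoly K x).comp (C α * X + C β)).Monic := by
    rw [Monic, leadingCoeff_comp (by omega), (minpoly.monic hx).leadingCoeff, one_mul,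
      leadingCoeff_linear hα0, hα]
  refine eq_of_monic_of_dvd_of_natDegree_le (minpoly.monic hx) hmonic
    (minpoly.dvd K x ?_) ?_
  · simpa [aeval_comp] using hroot
  · rw [natDegree_comp, hlin, mul_one]

theorem depressed_quartic_comp_affine_eq_self {R : Type*} [CommRing R] [IsDomain R]
    (h2 : (2 : R) ≠ 0) {a b c α β : R} (hα4 : α ^ 4 = 1) (hα2 : α ^ 2 ≠ 1)
    (h : (X ^ 4 + C a * X ^ 2 + C b * X + C c).comp (C α * X + C β) =
      X ^ 4 + C a * X ^ 2 + C b * X + C c) :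
    β = 0 ∧ a = 0 ∧ b = 0 := by
  have hexpand : (X ^ 4 + C a * X ^ 2 + C b * X + C c).comp (C α * X + C β) =
      X ^ 4 + C (4 * α ^ 3 * β) * X ^ 3 + C (6 * α ^ 2 * β ^ 2 + a * α ^ 2) * X ^ 2 +
      C (4 * α * β ^ 3 + 2 * a * α * β + b * α) * X +
      C (β ^ 4 + a * β ^ 2 + b * β + c) := by
    simp only [add_comp, mul_comp, pow_comp, X_comp, C_comp, map_add, map_mul, map_pow,
      map_ofNat]
    linear_combination (X : R[X]) ^ 4 * (by rw [← map_pow, hα4, map_one] : C α ^ 4 = 1)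
  rw [hexpand] at h
  have hX3 := congrArg (coeff · 3) h
  have hX2 := congrArg (coeff · 2) h
  have hX1 := congrArg (coeff · 1) h
  simp only [coeff_add, coeff_C_mul, coeff_X_pow, coeff_C, coeff_X] at hX3 hX2 hX1
  norm_num at hX3 hX2 hX1
  have h4 : (4 : R) ≠ 0 := by
    rw [show (4 : R) = 2 * 2 by norm_num]
    exact mul_ne_zero h2 h2
  have hα0 : α ≠ 0 := by
    rintro rfl
    norm_num at hα4
  obtain rfl : β = 0 := by tauto
  have hα1 : α - 1 ≠ 0 := sub_ne_zero.2 (by rintro rfl; simp at hα2)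
  refine ⟨rfl, ?_, ?_⟩
  · exact (mul_eq_zero.1 (by linear_combination hX2 : a * (α ^ 2 - 1) = 0)).resolve_right
      (sub_ne_zero.2 hα2)
  · exact (mul_eq_zero.1 (by linear_combination hX1 : b * (α - 1) = 0)).resolve_right hα1

end Polynomial

theorem quartic_aut_char_ne_two_general
    {k : Type*} [Field k] (hch : ringChar k ≠ 2) {n : ℕ}
    (a b c : MvPolynomial (Fin n) k)
    (f : Polynomial (MvPolynomial (Fin n) k))
    (hf : f = Polynomial.X ^ 4 + Polynomial.C a * Polynomial.X ^ 2 +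
      Polynomial.C b * Polynomial.X + Polynomial.C c)
    (hirr : Irreducible f)
    (L : Type*) [Field L] [Algebra (RatFF k n) L] (x : L)
    (hroot : Polynomial.aeval x
      (f.map (algebraMap (MvPolynomial (Fin n) k) (RatFF k n))) = 0)
    (g : L ≃ₐ[RatFF k n] L)
    (A : k) (hA2 : A ^ 2 ≠ 1) (hA4 : A ^ 4 = 1)
    (B : MvPolynomial (Fin n) k)
    (hgx : g x = algebraMap (RatFF k n) L
        (algebraMap (MvPolynomial (Fin n) k) (RatFF k n) (MvPolynomial.C A)) * x +
      algebraMap (RatFF k n) L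
        (algebraMap (MvPolynomial (Fin n) k) (RatFF k n) B)) :
    B = 0 ∧ a = 0 ∧ b = 0 := by
  set φ := algebraMap (MvPolynomial (Fin n) k) (RatFF k n)
  have hφ : Function.Injective φ := IsFractionRing.injective _ _
  have hC : Function.Injective (φ.comp MvPolynomial.C) := RingHom.injective _
  have hmonic : f.Monic := by rw [hf]; monicity!
  have hF : f.map φ = Polynomial.X ^ 4 + Polynomial.C (φ a) * Polynomial.X ^ 2 +
      Polynomial.C (φ b) * Polynomial.X + Polynomial.C (φ c) := by
    simp [hf]
  have hmin : minpoly (RatFF k n) x = f.map φ :=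
    (minpoly.eq_of_irreducible_of_monic
      (hmonic.irreducible_iff_irreducible_map_fraction_map.1 hirr) hroot (hmonic.map φ)).symm
  have hx : IsIntegral (RatFF k n) x := ⟨_, hmonic.map φ, hroot⟩
  have hα4 : φ (MvPolynomial.C A) ^ 4 = 1 := by rw [← map_pow, ← map_pow, hA4, map_one, map_one]
  have hα2 : φ (MvPolynomial.C A) ^ 2 ≠ 1 := fun h => hA2 (hC (by simpa using h))
  have h2 : (2 : RatFF k n) ≠ 0 := by
    simpa only [map_ofNat] using (map_ne_zero (φ.comp MvPolynomial.C)).2 (Ring.two_ne_zero hch)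
  have hdeg : (minpoly (RatFF k n) x).natDegree = 4 := by rw [hmin, hF]; compute_degree!
  have hcomp := Polynomial.minpoly_comp_affine_eq_self hx (hdeg ▸ hα4)
    (by rw [← hgx, ← minpoly.algEquiv_eq g x]; exact minpoly.aeval _ _)
  rw [hmin, hF] at hcomp
  obtain ⟨hB, ha, hb⟩ := Polynomial.depressed_quartic_comp_affine_eq_self h2 hα4 hα2 hcomp
  exact ⟨(map_eq_zero_iff φ hφ).1 hB, (map_eq_zero_iff φ hφ).1 ha, (map_eq_zero_iff φ hφ).1 hb⟩

/-- **Lemma (quartic, characteristic ≠ 2).** -/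
theorem quartic_aut_char_ne_two
    {k : Type*} [Field k] (hch : ringChar k ≠ 2) {n : ℕ}
    (a b c : MvPolynomial (Fin n) k)
    (f : Polynomial (MvPolynomial (Fin n) k))
    (hf : f = Polynomial.X ^ 4 + Polynomial.C a * Polynomial.X ^ 2 +
      Polynomial.C b * Polynomial.X + Polynomial.C c)
    (hirr : Irreducible f)
    (L : Type*) [Field L] [Algebra (RatFF k n) L] (x : L)
    (hroot : Polynomial.aeval x
      (f.map (algebraMap (MvPolynomial (Fin n) k) (RatFF k n))) = 0)
    (hgen : IntermediateField.adjoin (RatFF k n) {x} = ⊤)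
    (g : L ≃ₐ[RatFF k n] L) (hg : g ≠ AlgEquiv.refl)
    (A : k) (hA2 : A ^ 2 ≠ 1) (hA4 : A ^ 4 = 1)
    (B : MvPolynomial (Fin n) k)
    (hgx : g x = algebraMap (RatFF k n) L
        (algebraMap (MvPolynomial (Fin n) k) (RatFF k n) (MvPolynomial.C A)) * x +
      algebraMap (RatFF k n) L
        (algebraMap (MvPolynomial (Fin n) k) (RatFF k n) B)) :
    B = 0 ∧ a = 0 ∧ b = 0 :=
  quartic_aut_char_ne_two_general hch a b c f hf hirr L x hroot g A hA2 hA4 B hgx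
end
end

section
/- Let k be a field of characteristic 2 and let f(x,y_1,...,y_n) = x^4 + a·x^3 + b·x^2 + c·x + d be an irreducible polynomial with a, b, c, d ∈ k[y_1,...,y_n], and assume f is separable as a polynomial in x over K := k(y_1,...,y_n). Set L := Frac(k[x,y_1,...,y_n]/(f)). Suppose there is a nontrivial K-algebra automorphism g of L with g(x) = x + B, where B ∈ k[y_1,...,y_n] is a polynomial of degree at most 1. Then g has order 2, a = 0, and B^3 + b·B + c = 0. -/
theorem AlgEquiv.ext_of_adjoin_eq_top {K L : Type*} [Field K] [Field L] [Algebra K L]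
    {s : Set L} (hs : IntermediateField.adjoin K s = ⊤) {σ τ : L ≃ₐ[K] L}
    (h : ∀ y ∈ s, σ y = τ y) : σ = τ := by
  ext z
  have hz : z ∈ IntermediateField.adjoin K s := hs ▸ IntermediateField.mem_top
  induction hz using IntermediateField.adjoin_induction with
  | mem w hw => exact h w hw
  | algebraMap w => simp
  | add w₁ w₂ _ _ ih₁ ih₂ => simp [ih₁, ih₂]
  | inv w _ ih => simp [ih]
  | mul w₁ w₂ _ _ ih₁ ih₂ => simp [ih₁, ih₂]

theorem orderOf_eq_two_of_apply_eq_add_algebraMap {K L : Type*} [Field K] [Field L]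
    [Algebra K L] [CharP L 2] {x : L} (hgen : IntermediateField.adjoin K {x} = ⊤)
    {g : L ≃ₐ[K] L} (hg : g ≠ 1) {β : K} (hgx : g x = x + algebraMap K L β) :
    orderOf g = 2 := by
  refine orderOf_eq_prime (AlgEquiv.ext_of_adjoin_eq_top hgen ?_) hg
  rintro y rfl
  rw [pow_two, AlgEquiv.mul_apply, hgx, map_add, AlgEquiv.commutes, hgx, add_assoc,
    CharTwo.add_self_eq_zero, add_zero, AlgEquiv.one_apply]

namespace minpoly

open Polynomial

theorem eq_map_of_monic_of_irreducible {R K L : Type*} [CommRing R] [IsDomain R]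
    [IsIntegrallyClosed R] [Field K] [Algebra R K] [IsFractionRing R K] [Field L] [Algebra K L]
    {f : R[X]} (hm : f.Monic) (hirr : Irreducible f) {x : L}
    (hx : Polynomial.aeval x (f.map (algebraMap R K)) = 0) :
    minpoly K x = f.map (algebraMap R K) :=
  (eq_of_irreducible_of_monic (hm.irreducible_iff_irreducible_map_fraction_map.1 hirr)
    hx (hm.map _)).symm

theorem coeffs_eq_zero_of_aeval_quadratic_eq_zero {K L : Type*} [Field K] [Ring L]
    [Algebra K L] {x : L} (hdeg : 2 < (minpoly K x).natDegree) {p q r : K}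
    (h : Polynomial.aeval x (C p * X ^ 2 + C q * X + C r) = 0) : p = 0 ∧ q = 0 ∧ r = 0 := by
  have hzero : C p * X ^ 2 + C q * X + C r = 0 := by
    by_contra hne
    have := natDegree_le_natDegree (degree_le_of_ne_zero K x hne h)
    have : (C p * X ^ 2 + C q * X + C r).natDegree ≤ 2 := by compute_degree
    omega
  refine ⟨?_, ?_, ?_⟩
  · simpa using congrArg (coeff · 2) hzero
  · simpa using congrArg (coeff · 1) hzero
  · simpa using congrArg (coeff · 0) hzero

end minpoly

namespace Polynomial

noncomputable def quartic {R : Type*} [CommRing R] (a b c d : R) : R[X] :=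
  X ^ 4 + C a * X ^ 3 + C b * X ^ 2 + C c * X + C d

section Quartic

variable {R : Type*} [CommRing R] (a b c d : R)

theorem quartic_monic : (quartic a b c d).Monic := by
  unfold quartic; monicity!

theorem natDegree_quartic [Nontrivial R] : (quartic a b c d).natDegree = 4 := by
  unfold quartic; compute_degree!

theorem map_quartic {S : Type*} [CommRing S] (φ : R →+* S) :
    (quartic a b c d).map φ = quartic (φ a) (φ b) (φ c) (φ d) := by
  simp [quartic]

theorem quartic_comp_X_add_C_of_charTwo [CharP R 2] (β : R) :
    (quartic a b c d).comp (X + C β) = quartic a b c d +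
      (C (a * β) * X ^ 2 + C (a * β ^ 2) * X + C (β * (β ^ 3 + a * β ^ 2 + b * β + c))) := by
  have h2 : (2 : R[X]) = 0 := CharTwo.two_eq_zero
  simp only [quartic, add_comp, mul_comp, pow_comp, C_comp, X_comp, C_mul, C_add, C_pow]
  linear_combination (2 * X ^ 3 * C β + 3 * X ^ 2 * C β ^ 2 + 2 * X * C β ^ 3 +
    C a * C β * X ^ 2 + C a * C β ^ 2 * X + C b * C β * X) * h2

end Quartic

theorem quartic_translate_of_charTwo {K L : Type*} [Field K] [CharP K 2] [Field L] [Algebra K L]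
    {a b c d β : K} {x : L} (hdeg : 2 < (minpoly K x).natDegree)
    (hx : aeval x (quartic a b c d) = 0)
    (hxβ : aeval (x + algebraMap K L β) (quartic a b c d) = 0) (hβ : β ≠ 0) :
    a = 0 ∧ β ^ 3 + b * β + c = 0 := by
  have hx' : x + algebraMap K L β = aeval x (X + C β) := by simp
  rw [hx', ← aeval_comp, quartic_comp_X_add_C_of_charTwo, map_add, hx, zero_add] at hxβ
  obtain ⟨haβ, -, hβc⟩ := minpoly.coeffs_eq_zero_of_aeval_quadratic_eq_zero hdeg hxβ
  have ha : a = 0 := (mul_eq_zero.1 haβ).resolve_right hβ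
  exact ⟨ha, by simpa [ha, hβ] using hβc⟩

end Polynomial

theorem quartic_aut_char_two_general
    {k : Type*} [Field k] [CharP k 2] {n : ℕ}
    (a b c d : MvPolynomial (Fin n) k)
    (f : Polynomial (MvPolynomial (Fin n) k))
    (hf : f = Polynomial.X ^ 4 + Polynomial.C a * Polynomial.X ^ 3 +
      Polynomial.C b * Polynomial.X ^ 2 + Polynomial.C c * Polynomial.X +
      Polynomial.C d)
    (hirr : Irreducible f)
    (L : Type*) [Field L] [Algebra (RatFF k n) L] (x : L)
    (hroot : Polynomial.aeval x
      (f.map (algebraMap (MvPolynomial (Fin n) k) (RatFF k n))) = 0)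
    (hgen : IntermediateField.adjoin (RatFF k n) {x} = ⊤)
    (g : L ≃ₐ[RatFF k n] L) (hg : g ≠ AlgEquiv.refl)
    (B : MvPolynomial (Fin n) k)
    (hgx : g x = x + algebraMap (RatFF k n) L
        (algebraMap (MvPolynomial (Fin n) k) (RatFF k n) B)) :
    orderOf g = 2 ∧ a = 0 ∧ B ^ 3 + b * B + c = 0 := by
  set φ := algebraMap (MvPolynomial (Fin n) k) (RatFF k n)
  have hφ : Function.Injective φ := IsFractionRing.injective (MvPolynomial (Fin n) k) (RatFF k n)
  have : CharP L 2 := charP_of_injective_algebraMap (algebraMap (RatFF k n) L).injective 2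
  have hfq : f = Polynomial.quartic a b c d := hf
  have hfK : f.map φ = Polynomial.quartic (φ a) (φ b) (φ c) (φ d) := by
    rw [hfq, Polynomial.map_quartic]
  have hdeg : (minpoly (RatFF k n) x).natDegree = 4 := by
    rw [minpoly.eq_map_of_monic_of_irreducible (hfq ▸ Polynomial.quartic_monic a b c d) hirr
      hroot, hfK, Polynomial.natDegree_quartic]
  have hB : φ B ≠ 0 := fun hB => hg (AlgEquiv.ext_of_adjoin_eq_top hgen (by simp [hgx, hB]))
  have hgroot : Polynomial.aeval (g x) (f.map φ) = 0 := by
    rw [Polynomial.aeval_algHom_apply, hroot, map_zero]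
  rw [hfK] at hroot hgroot
  rw [hgx] at hgroot
  obtain ⟨ha, hBc⟩ := Polynomial.quartic_translate_of_charTwo (by omega) hroot hgroot hB
  exact ⟨orderOf_eq_two_of_apply_eq_add_algebraMap hgen hg hgx, hφ (by simpa using ha),
    hφ (by simpa using hBc)⟩

/-- **Lemma (quartic, characteristic 2).** -/
theorem quartic_aut_char_two
    {k : Type*} [Field k] [CharP k 2] {n : ℕ}
    (a b c d : MvPolynomial (Fin n) k)
    (f : Polynomial (MvPolynomial (Fin n) k))
    (hf : f = Polynomial.X ^ 4 + Polynomial.C a * Polynomial.X ^ 3 +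
      Polynomial.C b * Polynomial.X ^ 2 + Polynomial.C c * Polynomial.X +
      Polynomial.C d)
    (hirr : Irreducible f)
    (hsep : (f.map (algebraMap (MvPolynomial (Fin n) k) (RatFF k n))).Separable)
    (L : Type*) [Field L] [Algebra (RatFF k n) L] (x : L)
    (hroot : Polynomial.aeval x
      (f.map (algebraMap (MvPolynomial (Fin n) k) (RatFF k n))) = 0)
    (hgen : IntermediateField.adjoin (RatFF k n) {x} = ⊤)
    (g : L ≃ₐ[RatFF k n] L) (hg : g ≠ AlgEquiv.refl)
    (B : MvPolynomial (Fin n) k) (hBdeg : B.totalDegree ≤ 1)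
    (hgx : g x = x + algebraMap (RatFF k n) L
        (algebraMap (MvPolynomial (Fin n) k) (RatFF k n) B)) :
    orderOf g = 2 ∧ a = 0 ∧ B ^ 3 + b * B + c = 0 :=
  quartic_aut_char_two_general a b c d f hf hirr L x hroot hgen g hg B hgx
end

section
/- Let k be an algebraically closed field of characteristic 2 and let f(x,y_1,...,y_n) = x^4 + a_2·x^2 + a_3·x + a_4 be an irreducible polynomial with a_2, a_3, a_4 ∈ k[y_1,...,y_n], a_3·a_4 ≠ 0, and deg(a_i) ≤ i for i = 2, 3, 4. Set K := k(y_1,...,y_n) and L := Frac(k[x,y_1,...,y_n]/(f)). If L/K is a Galois extension whose Galois group is the direct product of two cyclic groups of order 2, then there exist nonzero polynomials B_1, B_2, B_3 ∈ k[y_1,...,y_n] such that t^3 + a_2·t + a_3 = (t - B_1)(t - B_2)(t - B_3) in k[y_1,...,y_n][t]. -/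
/-!
In characteristic 2 squaring is additive, so shifting by a root turns the quartic into
`f(X + x) = X · (X³ + a₂ X + a₃)`. Since `L = K(x)` is Galois, `f = ∏_{g ∈ G} (X - g x)`
over `L`, and cancelling `X` gives `X³ + a₂ X + a₃ = ∏_{g ≠ 1} (X - (x + g x))`. For the Klein
four-group `G = {1, g, h, hg}`, the vanishing `X³`-coefficient of `f` reads
`(x + g x) + h (x + g x) = 0`, so each `x + g x` is fixed by `G` and lies in `K`; being a root
of a monic cubic over the integrally closed ring `k[y]`, it lies in `k[y]`. It is nonzero
because `g x ≠ x`.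
-/

open Polynomial IntermediateField

theorem sum_eq_zero_of_quartic_eq_prod {R ι : Type*} [CommRing R] [Nontrivial R]
    {s : Finset ι} {r : ι → R} {a b c : R}
    (h : X ^ 4 + C a * X ^ 2 + C b * X + C c = ∏ i ∈ s, (X - C (r i))) :
    ∑ i ∈ s, r i = 0 := by
  have hdeg : (X ^ 4 + C a * X ^ 2 + C b * X + C c).natDegree = 4 := by compute_degree!
  have h3 := congrArg nextCoeff h
  rw [prod_X_sub_C_nextCoeff, nextCoeff, hdeg] at h3
  simpa using h3.symm

theorem Finset.exists_mem_prod_eq_of_card_eq_three {ι M : Type*} [CommMonoid M] {s : Finset ι}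
    (hs : s.card = 3) (f : ι → M) :
    ∃ i ∈ s, ∃ j ∈ s, ∃ l ∈ s, ∏ m ∈ s, f m = f i * f j * f l := by
  classical
  obtain ⟨i, j, l, hij, hil, hjl, rfl⟩ := Finset.card_eq_three.mp hs
  refine ⟨i, by simp, j, by simp, l, by simp, ?_⟩
  rw [Finset.prod_insert (by simp [hij, hil]), Finset.prod_insert (by simp [hjl]),
    Finset.prod_singleton, mul_assoc]

theorem IsKleinFour.of_mulEquiv {G H : Type*} [Group G] [Group H] [IsKleinFour H] (e : G ≃* H) :
    IsKleinFour G :=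
  ⟨by rw [Nat.card_congr e.toEquiv, IsKleinFour.card_four],
    by rw [Monoid.exponent_eq_of_mulEquiv e, IsKleinFour.exponent_two]⟩

namespace CharTwo

variable {R : Type*} [CommRing R] [CharP R 2]

theorem quartic_comp_X_add_C (a b c r : R) :
    (X ^ 4 + C a * X ^ 2 + C b * X + C c).comp (X + C r) =
      X * (X ^ 3 + C a * X + C b) + C (r ^ 4 + a * r ^ 2 + b * r + c) := by
  have h2 : (2 : R[X]) = 0 := two_eq_zero
  simp only [add_comp, mul_comp, pow_comp, X_comp, C_comp, map_add, map_mul, map_pow]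
  linear_combination
    (2 * X ^ 3 * C r + 3 * X ^ 2 * C r ^ 2 + 2 * X * C r ^ 3 + X * C a * C r) * h2

theorem cubic_eq_prod_of_quartic_eq_prod [IsDomain R] {ι : Type*} [DecidableEq ι] {s : Finset ι}
    {r : ι → R} {a b c : R} (h : X ^ 4 + C a * X ^ 2 + C b * X + C c = ∏ i ∈ s, (X - C (r i)))
    {i₀ : ι} (hi₀ : i₀ ∈ s) :
    X ^ 3 + C a * X + C b = ∏ i ∈ s.erase i₀, (X - C (r i₀ + r i)) := by
  have hroot : r i₀ ^ 4 + a * r i₀ ^ 2 + b * r i₀ + c = 0 := by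
    simpa [eval_prod, Finset.prod_eq_zero hi₀] using congrArg (eval (r i₀)) h
  have hcomp := congrArg (comp · (X + C (r i₀))) h
  simp only [quartic_comp_X_add_C, hroot, map_zero, add_zero, prod_comp, sub_comp, X_comp,
    C_comp] at hcomp
  rw [← Finset.mul_prod_erase s _ hi₀, add_sub_cancel_right] at hcomp
  refine mul_left_cancel₀ X_ne_zero (hcomp.trans (congrArg _ (Finset.prod_congr rfl ?_)))
  intro i _
  rw [map_add, sub_eq_add, sub_eq_add, add_assoc]

theorem smul_add_smul_eq_self_of_sum_smul_eq_zero {G R : Type*} [Group G] [IsKleinFour G]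
    [Fintype G] [Ring R] [CharP R 2] [MulSemiringAction G R] {x : R} (hsum : ∑ u : G, u • x = 0)
    (g h : G) : h • (x + g • x) = x + g • x := by
  classical
  by_cases hg : g = 1
  · rw [hg, one_smul, add_self_eq_zero, smul_zero]
  by_cases hh : h = 1
  · rw [hh, one_smul]
  by_cases hhg : h = g
  · rw [hhg, smul_add, smul_smul, IsKleinFour.mul_self, one_smul, add_comm]
  have hnot : h * g ∉ ({h, g, 1} : Set G) :=
    mul_notMem_of_exponent_two IsKleinFour.exponent_two hh hg hhg
  simp only [Set.mem_insert_iff, Set.mem_singleton_iff, not_or] at hnot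
  rw [← IsKleinFour.eq_finset_univ hh hg hhg, Finset.sum_insert (by simp [hnot.1, hnot.2]),
    Finset.sum_insert (by simp [hhg, hh]), Finset.sum_pair hg, one_smul, ← smul_smul] at hsum
  rw [smul_add, ← CharTwo.add_eq_zero, ← hsum]
  abel

end CharTwo

section Galois

variable {K L : Type*} [Field K] [Field L] [Algebra K L]

theorem AlgEquiv.injective_apply_of_adjoin_simple_eq_top [Algebra.IsAlgebraic K L] {x : L}
    (hx : K⟮x⟯ = ⊤) : Function.Injective fun g : L ≃ₐ[K] L => g x := by
  intro g g' h
  exact AlgEquiv.coe_toAlgHom_injective <| AlgHom.ext_of_adjoin_eq_top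
    (Algebra.adjoin_eq_top_of_primitive_element (Algebra.IsAlgebraic.isAlgebraic x) hx)
    (fun y hy => by rw [Set.mem_singleton_iff.mp hy]; exact h)

theorem IsGalois.map_minpoly_eq_prod_aut [FiniteDimensional K L] [IsGalois K L] {x : L}
    (hx : K⟮x⟯ = ⊤) :
    (minpoly K x).map (algebraMap K L) = ∏ g : L ≃ₐ[K] L, (X - C (g x)) := by
  refine eq_of_monic_of_dvd_of_natDegree_le
    (monic_prod_of_monic _ _ fun (g : L ≃ₐ[K] L) _ => monic_X_sub_C (g x))
    ((minpoly.monic (IsGalois.integral K x)).map _) ?_ ?_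
  · refine Finset.prod_dvd_of_coprime
      ((pairwise_coprime_X_sub_C
        (AlgEquiv.injective_apply_of_adjoin_simple_eq_top hx)).set_pairwise _)
      fun g _ => dvd_iff_isRoot.mpr ?_
    rw [IsRoot, eval_map_algebraMap, ← AlgEquiv.coe_toAlgHom, Polynomial.aeval_algHom_apply,
      minpoly.aeval, map_zero]
  · rw [natDegree_finsetProd_X_sub_C_eq_card, Finset.card_univ, ← Nat.card_eq_fintype_card,
      IsGalois.card_aut_eq_finrank, natDegree_map,
      (Field.primitive_element_iff_minpoly_natDegree_eq K x).mp hx]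

theorem IsGalois.mem_range_algebraMap_of_isIntegral_of_fixed (R : Type*) [CommRing R]
    [IsIntegrallyClosed R] [Algebra R K] [IsFractionRing R K] [Algebra R L]
    [IsScalarTower R K L] [IsGalois K L] {b : L} (hfix : ∀ g : L ≃ₐ[K] L, g b = b)
    (hb : IsIntegral R b) : b ∈ Set.range (algebraMap R L) := by
  obtain ⟨c, rfl⟩ := (InfiniteGalois.mem_range_algebraMap_iff_fixed b).mpr hfix
  rw [← IsScalarTower.coe_toAlgHom' R K L,
    isIntegral_algHom_iff _ (algebraMap K L).injective] at hb
  obtain ⟨B, rfl⟩ := IsIntegrallyClosed.isIntegral_iff.mp hb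
  exact ⟨B, IsScalarTower.algebraMap_apply R K L B⟩

end Galois

namespace CharTwo

variable {K L : Type*} [Field K] [Field L] [Algebra K L] [CharP L 2]

theorem add_aut_apply_ne_zero [Algebra.IsAlgebraic K L] {x : L} (hx : K⟮x⟯ = ⊤)
    {g : L ≃ₐ[K] L} (hg : g ≠ 1) : x + g x ≠ 0 := by
  rw [Ne, CharTwo.add_eq_zero]
  exact fun h => hg (AlgEquiv.injective_apply_of_adjoin_simple_eq_top hx (by simpa using h.symm))

theorem exists_cubic_eq_prod_of_isKleinFour (R : Type*) [CommRing R]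
    [IsIntegrallyClosed R] [Algebra R K] [IsFractionRing R K] [Algebra R L] [IsScalarTower R K L]
    [FiniteDimensional K L] [IsGalois K L] [IsKleinFour (L ≃ₐ[K] L)] {x : L} (hx : K⟮x⟯ = ⊤)
    {a b c : R}
    (hmin : minpoly K x = (X ^ 4 + C a * X ^ 2 + C b * X + C c).map (algebraMap R K)) :
    ∃ B₁ B₂ B₃ : R, B₁ ≠ 0 ∧ B₂ ≠ 0 ∧ B₃ ≠ 0 ∧
      X ^ 3 + C a * X + C b = (X - C B₁) * (X - C B₂) * (X - C B₃) := by
  classical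
  have hquartic : X ^ 4 + C (algebraMap R L a) * X ^ 2 + C (algebraMap R L b) * X +
      C (algebraMap R L c) = ∏ g : L ≃ₐ[K] L, (X - C (g x)) := by
    have := IsGalois.map_minpoly_eq_prod_aut hx
    rw [hmin, Polynomial.map_map, ← IsScalarTower.algebraMap_eq] at this
    simpa only [Polynomial.map_add, Polynomial.map_mul, Polynomial.map_pow, map_X, map_C]
      using this
  have hcubic := cubic_eq_prod_of_quartic_eq_prod hquartic (Finset.mem_univ 1)
  simp only [AlgEquiv.one_apply] at hcubic
  have hfix (g h : L ≃ₐ[K] L) : h (x + g x) = x + g x :=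
    smul_add_smul_eq_self_of_sum_smul_eq_zero (sum_eq_zero_of_quartic_eq_prod hquartic) g h
  have hdesc (g : L ≃ₐ[K] L) (hg : g ∈ Finset.univ.erase 1) :
      ∃ B : R, B ≠ 0 ∧ algebraMap R L B = x + g x := by
    have hint : IsIntegral R (x + g x) := by
      refine ⟨X ^ 3 + C a * X + C b, by monicity!, ?_⟩
      rw [eval₂_eq_eval_map]
      simpa [hcubic, eval_prod] using Finset.prod_eq_zero hg (by simp)
    obtain ⟨B, hB⟩ := IsGalois.mem_range_algebraMap_of_isIntegral_of_fixed R (hfix g) hint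
    refine ⟨B, ?_, hB⟩
    rintro rfl
    exact add_aut_apply_ne_zero hx (Finset.ne_of_mem_erase hg) (by rw [← hB, map_zero])
  choose! B hB0 hB using hdesc
  have hinj : Function.Injective (algebraMap R L) := by
    rw [IsScalarTower.algebraMap_eq R K L]
    exact (algebraMap K L).injective.comp (IsFractionRing.injective R K)
  have hcubicR : X ^ 3 + C a * X + C b = ∏ g ∈ Finset.univ.erase 1, (X - C (B g)) := by
    refine map_injective _ hinj ?_
    simp only [Polynomial.map_add, Polynomial.map_mul, Polynomial.map_pow, map_X, map_C, hcubic,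
      Polynomial.map_prod, Polynomial.map_sub]
    exact Finset.prod_congr rfl fun g hg => by rw [hB g hg]
  obtain ⟨g₁, h₁, g₂, h₂, g₃, h₃, hprod⟩ := Finset.exists_mem_prod_eq_of_card_eq_three
    (by rw [Finset.card_erase_of_mem (Finset.mem_univ 1), Finset.card_univ,
      IsKleinFour.card_four'])
    fun g => X - C (B g)
  exact ⟨B g₁, B g₂, B g₃, hB0 _ h₁, hB0 _ h₂, hB0 _ h₃, hcubicR.trans hprod⟩

end CharTwo

theorem quartic_galois_klein_four_char_two_general
    {k : Type*} [Field k] [CharP k 2] {n : ℕ}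
    (a₂ a₃ a₄ : MvPolynomial (Fin n) k)
    (f : Polynomial (MvPolynomial (Fin n) k))
    (hf : f = Polynomial.X ^ 4 + Polynomial.C a₂ * Polynomial.X ^ 2 +
      Polynomial.C a₃ * Polynomial.X + Polynomial.C a₄)
    (hirr : Irreducible f)
    (L : Type*) [Field L] [Algebra (RatFF k n) L] (x : L)
    (hroot : Polynomial.aeval x
      (f.map (algebraMap (MvPolynomial (Fin n) k) (RatFF k n))) = 0)
    (hgen : IntermediateField.adjoin (RatFF k n) {x} = ⊤)
    (hGal : IsGalois (RatFF k n) L)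
    (hklein : Nonempty ((L ≃ₐ[RatFF k n] L) ≃*
      Multiplicative (ZMod 2) × Multiplicative (ZMod 2))) :
    ∃ B₁ B₂ B₃ : MvPolynomial (Fin n) k,
      B₁ ≠ 0 ∧ B₂ ≠ 0 ∧ B₃ ≠ 0 ∧
      (Polynomial.X ^ 3 + Polynomial.C a₂ * Polynomial.X + Polynomial.C a₃ :
          Polynomial (MvPolynomial (Fin n) k)) =
        (Polynomial.X - Polynomial.C B₁) * (Polynomial.X - Polynomial.C B₂) *
          (Polynomial.X - Polynomial.C B₃) := by
  subst hf
  obtain ⟨e⟩ := hklein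
  have : IsKleinFour (L ≃ₐ[RatFF k n] L) :=
    .of_mulEquiv (e.trans (MulEquiv.prodMultiplicative _ _).symm)
  have : FiniteDimensional (RatFF k n) L := by
    have := IsKleinFour.instFinite (G := L ≃ₐ[RatFF k n] L)
    exact IsGalois.finiteDimensional_of_finite _ _
  have : CharP L 2 := charP_of_injective_algebraMap (algebraMap (RatFF k n) L).injective 2
  let : Algebra (MvPolynomial (Fin n) k) L :=
    ((algebraMap (RatFF k n) L).comp (algebraMap (MvPolynomial (Fin n) k) (RatFF k n))).toAlgebra
  have : IsScalarTower (MvPolynomial (Fin n) k) (RatFF k n) L := .of_algebraMap_eq fun _ => rfl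
  have hmonic :
      (X ^ 4 + C a₂ * X ^ 2 + C a₃ * X + C a₄ : (MvPolynomial (Fin n) k)[X]).Monic := by
    monicity!
  exact CharTwo.exists_cubic_eq_prod_of_isKleinFour _ hgen <|
    (minpoly.eq_of_irreducible_of_monic
      (hmonic.irreducible_iff_irreducible_map_fraction_map.mp hirr) hroot (hmonic.map _)).symm

/-- **Lemma (quartic Galois extensions with Klein four group, characteristic 2).** -/
theorem quartic_galois_klein_four_char_two
    {k : Type*} [Field k] [IsAlgClosed k] [CharP k 2] {n : ℕ}
    (a₂ a₃ a₄ : MvPolynomial (Fin n) k)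
    (ha : a₃ * a₄ ≠ 0)
    (hdeg₂ : a₂.totalDegree ≤ 2) (hdeg₃ : a₃.totalDegree ≤ 3)
    (hdeg₄ : a₄.totalDegree ≤ 4)
    (f : Polynomial (MvPolynomial (Fin n) k))
    (hf : f = Polynomial.X ^ 4 + Polynomial.C a₂ * Polynomial.X ^ 2 +
      Polynomial.C a₃ * Polynomial.X + Polynomial.C a₄)
    (hirr : Irreducible f)
    (L : Type*) [Field L] [Algebra (RatFF k n) L] (x : L)
    (hroot : Polynomial.aeval x
      (f.map (algebraMap (MvPolynomial (Fin n) k) (RatFF k n))) = 0)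
    (hgen : IntermediateField.adjoin (RatFF k n) {x} = ⊤)
    (hGal : IsGalois (RatFF k n) L)
    (hklein : Nonempty ((L ≃ₐ[RatFF k n] L) ≃*
      Multiplicative (ZMod 2) × Multiplicative (ZMod 2))) :
    ∃ B₁ B₂ B₃ : MvPolynomial (Fin n) k,
      B₁ ≠ 0 ∧ B₂ ≠ 0 ∧ B₃ ≠ 0 ∧
      (Polynomial.X ^ 3 + Polynomial.C a₂ * Polynomial.X + Polynomial.C a₃ :
          Polynomial (MvPolynomial (Fin n) k)) =
        (Polynomial.X - Polynomial.C B₁) * (Polynomial.X - Polynomial.C B₂) *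
          (Polynomial.X - Polynomial.C B₃) :=
  quartic_galois_klein_four_char_two_general a₂ a₃ a₄ f hf hirr L x hroot hgen hGal hklein
end

section
/- Let k be an algebraically closed field of characteristic 2, let P = [1:0:...:0] ∈ P^{n+1}_k, and let X ⊂ P^{n+1}_k be an irreducible quartic hypersurface defined by F = Σ_{i=0}^4 F_i(X_1,...,X_{n+1}) X_0^{4-i}, where each F_i is a form of degree i. If P is an outer Galois point for X such that the Galois group G_{π_P} is the direct product of two cyclic groups of order 2, and F_1 = 0, then P is an extendable outer Galois point for X. -/
noncomputable section

universe u v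

open MvPolynomial

/-- The form `F = Σ_{i=0}^d F_i(X₁,…,X_{n+1})·X₀^{d-i}` in the variables `X₀,…,X_{n+1}`,
where variable `0` is `X₀` and `Fin.succ j` is `X_{j+1}`. -/
def totalForm {k : Type*} [CommRing k] {n : ℕ} (d : ℕ)
    (F : ℕ → MvPolynomial (Fin (n + 1)) k) : MvPolynomial (Fin (n + 2)) k :=
  ∑ i ∈ Finset.range (d + 1), rename Fin.succ (F i) * X 0 ^ (d - i)

/-- An affine representative of the point `P = [1:0:⋯:0] ∈ ℙ^{n+1}_k`. -/
def Ppt (k : Type*) [CommRing k] (n : ℕ) : Fin (n + 2) → k :=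
  fun j => if j = 0 then 1 else 0

/-- `P = [1:0:⋯:0]` lies on the hypersurface `{F = 0}`. -/
def MemAtP {k : Type*} [CommRing k] {n : ℕ}
    (F : MvPolynomial (Fin (n + 2)) k) : Prop :=
  eval (Ppt k n) F = 0

/-- The hypersurface `{F = 0}` is smooth at `P = [1:0:⋯:0]`: `P` lies on it and some
partial derivative of `F` does not vanish at `P`. -/
def SmoothAtP {k : Type*} [CommRing k] {n : ℕ}
    (F : MvPolynomial (Fin (n + 2)) k) : Prop :=
  MemAtP F ∧ ∃ j, eval (Ppt k n) (pderiv j F) ≠ 0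

/-- The polynomial over `K = k(y₁,…,yₙ)` obtained from the form `F` by substituting
`X₀ ↦ T`, `X_j ↦ y_j` (for `1 ≤ j ≤ n`) and `X_{n+1} ↦ 1`.  A root of this polynomial
generates the function field of `{F = 0}` over the function field of `ℙⁿ`, the field
extension being the one induced by the projection `π_P` from `P = [1:0:⋯:0]`. -/
def projPoly {k : Type*} [Field k] {n : ℕ}
    (F : MvPolynomial (Fin (n + 2)) k) : Polynomial (RatFF k n) :=
  eval₂ (Polynomial.C.comp ((algebraMap (MvPolynomial (Fin n) k) (RatFF k n)).comp
      (MvPolynomial.C)))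
    (fun j =>
      if h0 : j = (0 : Fin (n + 2)) then Polynomial.X
      else if h : (j : ℕ) < n + 1 then
        Polynomial.C (algebraMap (MvPolynomial (Fin n) k) (RatFF k n)
          (X ⟨(j : ℕ) - 1, by
            have hj : (j : ℕ) ≠ 0 := fun hc => h0 (Fin.ext (by rw [hc, Fin.val_zero]))
            omega⟩))
      else 1) F

/-- A `K`-automorphism `σ` of the function field model `(L, x)` is induced by a linear
change of coordinates (a matrix in `GL(n+2,k)` preserving the hypersurface and commuting
with the projection) exactly when `σ(x) = a·x + b` with `a ∈ k` and
`b ∈ k[y₁,…,yₙ]` of degree at most one. -/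
def InducedByMatrix {k : Type*} [Field k] {n : ℕ} {L : Type*} [Field L]
    [Algebra (RatFF k n) L] (x : L) (σ : L ≃ₐ[RatFF k n] L) : Prop :=
  ∃ (a : k) (b : MvPolynomial (Fin n) k), b.totalDegree ≤ 1 ∧
    σ x = algebraMap (RatFF k n) L
        (algebraMap (MvPolynomial (Fin n) k) (RatFF k n) (MvPolynomial.C a)) * x +
      algebraMap (RatFF k n) L (algebraMap (MvPolynomial (Fin n) k) (RatFF k n) b)

/-- The field extension induced by the projection `π_P` (of degree `m`) is Galois:
stated for every model `(L, x)` of the function field of `{F = 0}` over `K = k(ℙⁿ)`. -/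
def IsGaloisProj {k : Type u} [Field k] {n : ℕ}
    (F : MvPolynomial (Fin (n + 2)) k) (m : ℕ) : Prop :=
  ∀ (L : Type v) [Field L] [Algebra (RatFF k n) L] (x : L),
    Polynomial.aeval x (projPoly F) = 0 →
    IntermediateField.adjoin (RatFF k n) {x} = ⊤ →
    Module.finrank (RatFF k n) L = m →
    IsGalois (RatFF k n) L

/-- The extension induced by `π_P` is Galois with Galois group generated by
automorphisms induced by matrices. -/
def IsExtendableGaloisProj {k : Type u} [Field k] {n : ℕ}
    (F : MvPolynomial (Fin (n + 2)) k) (m : ℕ) : Prop :=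
  ∀ (L : Type v) [Field L] [Algebra (RatFF k n) L] (x : L),
    Polynomial.aeval x (projPoly F) = 0 →
    IntermediateField.adjoin (RatFF k n) {x} = ⊤ →
    Module.finrank (RatFF k n) L = m →
    IsGalois (RatFF k n) L ∧
      Subgroup.closure {σ : L ≃ₐ[RatFF k n] L | InducedByMatrix x σ} = ⊤

/-- `P = [1:0:⋯:0]` is an inner Galois point for the degree-`d` hypersurface `{F = 0}`. -/
def IsInnerGaloisPoint {k : Type u} [Field k] {n : ℕ}
    (F : MvPolynomial (Fin (n + 2)) k) (d : ℕ) : Prop :=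
  SmoothAtP F ∧ IsGaloisProj.{u, v} F (d - 1)

/-- `P = [1:0:⋯:0]` is an extendable inner Galois point for `{F = 0}` of degree `d`. -/
def IsExtendableInnerGaloisPoint {k : Type u} [Field k] {n : ℕ}
    (F : MvPolynomial (Fin (n + 2)) k) (d : ℕ) : Prop :=
  SmoothAtP F ∧ IsExtendableGaloisProj.{u, v} F (d - 1)

/-- `P = [1:0:⋯:0]` is an outer Galois point for the degree-`d` hypersurface `{F = 0}`. -/
def IsOuterGaloisPoint {k : Type u} [Field k] {n : ℕ}
    (F : MvPolynomial (Fin (n + 2)) k) (d : ℕ) : Prop :=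
  ¬ MemAtP F ∧ IsGaloisProj.{u, v} F d

/-- `P = [1:0:⋯:0]` is an extendable outer Galois point for `{F = 0}` of degree `d`. -/
def IsExtendableOuterGaloisPoint {k : Type u} [Field k] {n : ℕ}
    (F : MvPolynomial (Fin (n + 2)) k) (d : ℕ) : Prop :=
  ¬ MemAtP F ∧ IsExtendableGaloisProj.{u, v} F d

/-- The Galois group of the extension induced by `π_P` (of degree `m`) is cyclic of
order `c`: stated for every model `(L, x)`. -/
def GalGroupCyclicOfOrder {k : Type u} [Field k] {n : ℕ}
    (F : MvPolynomial (Fin (n + 2)) k) (m c : ℕ) : Prop :=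
  ∀ (L : Type v) [Field L] [Algebra (RatFF k n) L] (x : L),
    Polynomial.aeval x (projPoly F) = 0 →
    IntermediateField.adjoin (RatFF k n) {x} = ⊤ →
    Module.finrank (RatFF k n) L = m →
    IsCyclic (L ≃ₐ[RatFF k n] L) ∧ Nat.card (L ≃ₐ[RatFF k n] L) = c

/-- The Galois group of the extension induced by `π_P` (of degree `m`) is the direct
product of two cyclic groups of order two. -/
def GalGroupKleinFour {k : Type u} [Field k] {n : ℕ}
    (F : MvPolynomial (Fin (n + 2)) k) (m : ℕ) : Prop :=
  ∀ (L : Type v) [Field L] [Algebra (RatFF k n) L] (x : L),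
    Polynomial.aeval x (projPoly F) = 0 →
    IntermediateField.adjoin (RatFF k n) {x} = ⊤ →
    Module.finrank (RatFF k n) L = m →
    Nonempty ((L ≃ₐ[RatFF k n] L) ≃*
      Multiplicative (ZMod 2) × Multiplicative (ZMod 2))

/-!
Put `β σ = σ x - x` for `σ` in the Galois group. Since `F₁ = 0`, `x` is a root of a quartic
`T⁴ + pT² + qT + r` with `p, q, r ∈ k[y]`, `deg q ≤ 3`, and in characteristic 2 the map
`T ↦ T⁴ + pT² + qT` is additive; so every nonzero `β σ` is a root of the cubic `T³ + pT + q`.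
For distinct nontrivial `σ, τ` the three distinct roots `β σ, β τ, β (στ)` of that cubic sum to
zero, and with the cocycle identity `β (στ) = σ (β τ) + β σ` and `σ² = 1` this makes every `β τ`
Galois invariant. So `β τ ∈ k(y)`, and being integral over `k[y]` it lies in `k[y]`. Finally
`β σ · β τ · (β σ + β τ) = q` has degree at most 3 with no factor zero, so `deg β σ ≤ 1`: every
`σ` is the translation `x ↦ x + β σ`, which is induced by a matrix.
-/

section Cubic

variable {K : Type*} [Field K] {a b c p q : K}

theorem sq_add_mul_add_sq_add_eq_zero_of_cubic_roots (hab : a ≠ b)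
    (ha : a ^ 3 + p * a + q = 0) (hb : b ^ 3 + p * b + q = 0) :
    a ^ 2 + a * b + b ^ 2 + p = 0 :=
  (mul_eq_zero.mp (by linear_combination ha - hb :
    (a - b) * (a ^ 2 + a * b + b ^ 2 + p) = 0)).resolve_left (sub_ne_zero.mpr hab)

theorem eq_mul_mul_add_of_cubic_roots (hab : a ≠ b)
    (ha : a ^ 3 + p * a + q = 0) (hb : b ^ 3 + p * b + q = 0) :
    q = a * b * (a + b) := by
  linear_combination ha - a * sq_add_mul_add_sq_add_eq_zero_of_cubic_roots hab ha hb

theorem add_add_eq_zero_of_cubic_roots (hab : a ≠ b) (hac : a ≠ c) (hbc : b ≠ c)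
    (ha : a ^ 3 + p * a + q = 0) (hb : b ^ 3 + p * b + q = 0) (hc : c ^ 3 + p * c + q = 0) :
    a + b + c = 0 :=
  (mul_eq_zero.mp (by
    linear_combination sq_add_mul_add_sq_add_eq_zero_of_cubic_roots hab ha hb -
      sq_add_mul_add_sq_add_eq_zero_of_cubic_roots hac ha hc :
    (b - c) * (a + b + c) = 0)).resolve_left (sub_ne_zero.mpr hbc)

end Cubic

theorem additive_quartic_sub_eq_zero_of_charTwo {L : Type*} [CommRing L] [CharP L 2]
    {x y p q r : L}
    (hx : x ^ 4 + p * x ^ 2 + q * x + r = 0) (hy : y ^ 4 + p * y ^ 2 + q * y + r = 0) :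
    (y - x) ^ 4 + p * (y - x) ^ 2 + q * (y - x) = 0 := by
  linear_combination hy - hx + (-2 * y ^ 3 * x + 3 * y ^ 2 * x ^ 2 - 2 * y * x ^ 3 + x ^ 4
    + p * (x ^ 2 - x * y)) * CharTwo.two_eq_zero (R := L)

theorem algEquiv_apply_injective_of_adjoin_simple_eq_top {K L : Type*} [Field K] [Field L]
    [Algebra K L] [FiniteDimensional K L] {x : L} (hx : IntermediateField.adjoin K {x} = ⊤) :
    Function.Injective fun σ : L ≃ₐ[K] L => σ x := fun σ τ h => by
  have hx' : Algebra.adjoin K {x} = ⊤ := by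
    rw [← IntermediateField.adjoin_simple_toSubalgebra_of_isAlgebraic
      (Algebra.IsAlgebraic.isAlgebraic x), hx, IntermediateField.top_toSubalgebra]
  exact AlgEquiv.coe_toAlgHom_injective (AlgHom.ext_of_adjoin_eq_top hx' (by simpa using h))

theorem exists_algebraMap_eq_of_cubic_root {R K : Type*} [CommRing R] [IsDomain R]
    [IsIntegrallyClosed R] [Field K] [Algebra R K] [IsFractionRing R K] {p q : R} {b : K}
    (hb : b ^ 3 + algebraMap R K p * b + algebraMap R K q = 0) : ∃ a : R, algebraMap R K a = b := by
  refine IsIntegrallyClosed.isIntegral_iff.mp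
    ⟨Polynomial.X ^ 3 + (Polynomial.C p * Polynomial.X + Polynomial.C q),
      Polynomial.monic_X_pow_add (by compute_degree!), ?_⟩
  simpa [Polynomial.eval₂_add, add_assoc] using hb

namespace MvPolynomial

theorem totalDegree_aeval_le {σ τ R : Type*} [CommSemiring R] {f : σ → MvPolynomial τ R}
    (hf : ∀ i, (f i).totalDegree ≤ 1) (p : MvPolynomial σ R) :
    (aeval f p).totalDegree ≤ p.totalDegree := by
  conv_lhs => rw [← p.support_sum_monomial_coeff, map_sum]
  refine totalDegree_finsetSum_le fun v hv => ?_
  rw [aeval_monomial, Finsupp.prod]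
  calc _ ≤ (algebraMap R (MvPolynomial τ R) (coeff v p)).totalDegree
        + (∏ i ∈ v.support, f i ^ v i).totalDegree := totalDegree_mul _ _
    _ ≤ 0 + ∑ i ∈ v.support, v i * 1 := by
        gcongr
        · exact (totalDegree_C _).le
        · refine (totalDegree_finsetProd _ _).trans (Finset.sum_le_sum fun i _ => ?_)
          exact (totalDegree_pow _ _).trans (Nat.mul_le_mul_left _ (hf i))
    _ ≤ p.totalDegree := by simpa [Finsupp.sum] using le_totalDegree hv

theorem totalDegree_le_one_of_totalDegree_mul_mul_add_le_three
    {σ R : Type*} [CommRing R] [IsDomain R] {a b : MvPolynomial σ R}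
    (ha : a ≠ 0) (hb : b ≠ 0) (hab : a + b ≠ 0) (h : (a * b * (a + b)).totalDegree ≤ 3) :
    a.totalDegree ≤ 1 := by
  rw [totalDegree_mul_of_isDomain (mul_ne_zero ha hb) hab,
    totalDegree_mul_of_isDomain ha hb] at h
  have : a.totalDegree ≤ max (a + b).totalDegree b.totalDegree := by
    simpa using totalDegree_sub (a + b) b
  omega

end MvPolynomial

section CharTwoQuartic

variable {K L : Type*} [Field K] [Field L] [Algebra K L] [CharP L 2] {x : L} {p q r : K}

theorem algEquiv_apply_sub_cubic (hinj : Function.Injective fun σ : L ≃ₐ[K] L => σ x)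
    (hx : x ^ 4 + algebraMap K L p * x ^ 2 + algebraMap K L q * x + algebraMap K L r = 0)
    {σ : L ≃ₐ[K] L} (hσ : σ ≠ 1) :
    (σ x - x) ^ 3 + algebraMap K L p * (σ x - x) + algebraMap K L q = 0 := by
  have hσx : σ x ^ 4 + algebraMap K L p * σ x ^ 2 + algebraMap K L q * σ x
      + algebraMap K L r = 0 := by
    simpa using congrArg σ hx
  have hne : σ x - x ≠ 0 := sub_ne_zero.mpr fun h => hσ (hinj h)
  exact (mul_eq_zero.mp (by linear_combination additive_quartic_sub_eq_zero_of_charTwo hx hσx :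
    (σ x - x) * ((σ x - x) ^ 3 + algebraMap K L p * (σ x - x) + algebraMap K L q) = 0)
    ).resolve_left hne

theorem algEquiv_apply_sub_fixed (hinj : Function.Injective fun σ : L ≃ₐ[K] L => σ x)
    (hsq : ∀ σ : L ≃ₐ[K] L, σ * σ = 1)
    (hx : x ^ 4 + algebraMap K L p * x ^ 2 + algebraMap K L q * x + algebraMap K L r = 0)
    (σ τ : L ≃ₐ[K] L) : σ (τ x - x) = τ x - x := by
  have h2 : (2 : L) = 0 := CharTwo.two_eq_zero
  have cocycle : ∀ σ τ : L ≃ₐ[K] L, (σ * τ) x - x = σ (τ x - x) + (σ x - x) := by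
    intro σ τ
    rw [AlgEquiv.mul_apply, map_sub]
    ring
  have hβ : Function.Injective fun σ : L ≃ₐ[K] L => σ x - x := sub_left_injective.comp hinj
  rcases eq_or_ne σ 1 with rfl | hσ
  · rfl
  rcases eq_or_ne τ 1 with rfl | hτ
  · simp
  rcases eq_or_ne τ σ with rfl | hτσ
  · have := cocycle τ τ
    rw [hsq, AlgEquiv.one_apply, sub_self] at this
    linear_combination -this - (τ x - x) * h2
  have hστ1 : σ * τ ≠ 1 := fun h => hτσ (mul_left_cancel (h.trans (hsq σ).symm))
  have hsum := add_add_eq_zero_of_cubic_roots (hβ.ne hτσ.symm) (hβ.ne (mul_ne_left.mpr hτ).symm)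
    (hβ.ne (mul_ne_right.mpr hσ).symm) (algEquiv_apply_sub_cubic hinj hx hσ)
    (algEquiv_apply_sub_cubic hinj hx hτ) (algEquiv_apply_sub_cubic hinj hx hστ1)
  linear_combination -cocycle σ τ + hsum - (σ x - x + (τ x - x)) * h2

theorem algEquiv_apply_sub_mem_range [IsGalois K L] [FiniteDimensional K L]
    (hinj : Function.Injective fun σ : L ≃ₐ[K] L => σ x) (hsq : ∀ σ : L ≃ₐ[K] L, σ * σ = 1)
    (hx : x ^ 4 + algebraMap K L p * x ^ 2 + algebraMap K L q * x + algebraMap K L r = 0)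
    (τ : L ≃ₐ[K] L) : τ x - x ∈ Set.range (algebraMap K L) :=
  (IsGalois.mem_range_algebraMap_iff_fixed _).mpr fun σ => algEquiv_apply_sub_fixed hinj hsq hx σ τ

end CharTwoQuartic

theorem exists_algebraMap_eq_algEquiv_apply_sub {R K L : Type*} [CommRing R] [IsDomain R]
    [IsIntegrallyClosed R] [Field K] [Algebra R K] [IsFractionRing R K] [Field L] [Algebra K L]
    [IsGalois K L] [FiniteDimensional K L] [CharP L 2] {x : L} {p q r : R}
    (hinj : Function.Injective fun σ : L ≃ₐ[K] L => σ x) (hsq : ∀ σ : L ≃ₐ[K] L, σ * σ = 1)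
    (hx : x ^ 4 + algebraMap K L (algebraMap R K p) * x ^ 2
      + algebraMap K L (algebraMap R K q) * x + algebraMap K L (algebraMap R K r) = 0)
    (σ : L ≃ₐ[K] L) : ∃ b : R, algebraMap K L (algebraMap R K b) = σ x - x := by
  rcases eq_or_ne σ 1 with rfl | hσ
  · exact ⟨0, by simp⟩
  obtain ⟨b, hb⟩ := algEquiv_apply_sub_mem_range hinj hsq hx σ
  have hcubic := algEquiv_apply_sub_cubic hinj hx hσ
  rw [← hb] at hcubic
  obtain ⟨a, rfl⟩ := exists_algebraMap_eq_of_cubic_root (p := p) (q := q)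
    ((algebraMap K L).injective (by simpa using hcubic))
  exact ⟨a, hb⟩

section Dehomogenize

variable {k : Type*} [Field k] {n : ℕ}

def dehomogenize (k : Type*) [Field k] (n : ℕ) :
    MvPolynomial (Fin (n + 1)) k →ₐ[k] MvPolynomial (Fin n) k :=
  aeval fun j => if h : (j : ℕ) < n then X ⟨j, h⟩ else 1

theorem totalDegree_dehomogenize_le (p : MvPolynomial (Fin (n + 1)) k) :
    (dehomogenize k n p).totalDegree ≤ p.totalDegree :=
  totalDegree_aeval_le (fun j => by split_ifs <;> simp) p

theorem aeval_projPoly_totalForm {L : Type*} [Field L] [Algebra (RatFF k n) L] (d : ℕ)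
    (F : ℕ → MvPolynomial (Fin (n + 1)) k) (x : L) :
    Polynomial.aeval x (projPoly (totalForm d F)) = ∑ i ∈ Finset.range (d + 1),
      algebraMap (RatFF k n) L (algebraMap _ _ (dehomogenize k n (F i))) * x ^ (d - i) := by
  simp only [projPoly, totalForm, eval₂_sum, eval₂_mul, eval₂_pow, eval₂_X, eval₂_rename,
    map_sum, map_mul, map_pow, dite_true, Polynomial.aeval_X]
  refine Finset.sum_congr rfl fun i _ => ?_
  congr 1
  rw [dehomogenize, aeval_def, ← RingHom.comp_apply, eval₂_comp_left, ← AlgHom.coe_toRingHom,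
    eval₂_comp_left]
  congr 1
  · ext c
    simp
  · funext j
    simp only [Function.comp_apply, Fin.succ_ne_zero, dite_false, Fin.val_succ,
      add_lt_add_iff_right, add_tsub_cancel_right]
    split_ifs <;> simp

theorem eval_Ppt_totalForm {d : ℕ} {F : ℕ → MvPolynomial (Fin (n + 1)) k}
    (hhom : ∀ i ≤ d, (F i).IsHomogeneous i) :
    eval (Ppt k n) (totalForm d F) = coeff 0 (F 0) := by
  have hP : Ppt k n ∘ Fin.succ = 0 := funext fun j => by simp [Ppt, Fin.succ_ne_zero]
  simp only [totalForm, map_sum, map_mul, map_pow, eval_rename, hP, eval_X]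
  rw [Finset.sum_eq_single 0]
  · simp [Ppt, constantCoeff_eq]
  · intro i hi hi0
    rw [eval_zero, constantCoeff_eq, (hhom i (by simpa [Nat.lt_succ_iff] using hi)).coeff_eq_zero
      (by simpa using Ne.symm hi0), zero_mul]
  · simp

theorem quartic_of_aeval_projPoly_totalForm {L : Type*} [Field L] [Algebra (RatFF k n) L]
    {F : ℕ → MvPolynomial (Fin (n + 1)) k} {a : k} (hF0 : F 0 = C a) (ha : a ≠ 0)
    (hF1 : F 1 = 0) {x : L} (hx : Polynomial.aeval x (projPoly (totalForm 4 F)) = 0) :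
    x ^ 4 + algebraMap (RatFF k n) L (algebraMap _ _ (C a⁻¹ * dehomogenize k n (F 2))) * x ^ 2
      + algebraMap (RatFF k n) L (algebraMap _ _ (C a⁻¹ * dehomogenize k n (F 3))) * x
      + algebraMap (RatFF k n) L (algebraMap _ _ (C a⁻¹ * dehomogenize k n (F 4))) = 0 := by
  have hunit : algebraMap (RatFF k n) L (algebraMap (MvPolynomial (Fin n) k) _ (C a⁻¹))
      * algebraMap (RatFF k n) L (algebraMap (MvPolynomial (Fin n) k) _ (C a)) = 1 := by
    rw [← map_mul, ← map_mul, ← C_mul, inv_mul_cancel₀ ha, C_1, map_one, map_one]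
  rw [aeval_projPoly_totalForm, Finset.sum_range_succ, Finset.sum_range_succ,
    Finset.sum_range_succ, Finset.sum_range_succ, Finset.sum_range_one, hF0, hF1] at hx
  simp only [algHom_C, algebraMap_eq, map_zero, zero_mul, add_zero, Nat.sub_self, pow_zero,
    mul_one] at hx
  simp only [map_mul]
  linear_combination algebraMap (RatFF k n) L (algebraMap (MvPolynomial (Fin n) k) _ (C a⁻¹)) * hx
    - x ^ 4 * hunit

end Dehomogenize

theorem inducedByMatrix_of_charTwo_quartic {k : Type*} [Field k] {n : ℕ} {L : Type*}
    [Field L] [Algebra (RatFF k n) L] [IsGalois (RatFF k n) L]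
    [FiniteDimensional (RatFF k n) L] [CharP L 2] {x : L}
    (hinj : Function.Injective fun σ : L ≃ₐ[RatFF k n] L => σ x)
    (hsq : ∀ σ : L ≃ₐ[RatFF k n] L, σ * σ = 1) (hcard : 3 ≤ Nat.card (L ≃ₐ[RatFF k n] L))
    {p q r : MvPolynomial (Fin n) k} (hq : q.totalDegree ≤ 3)
    (hx : x ^ 4 + algebraMap _ L (algebraMap _ (RatFF k n) p) * x ^ 2
      + algebraMap _ L (algebraMap _ (RatFF k n) q) * x
      + algebraMap _ L (algebraMap _ (RatFF k n) r) = 0)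
    (σ : L ≃ₐ[RatFF k n] L) : InducedByMatrix x σ := by
  let ι := (algebraMap (RatFF k n) L).comp (algebraMap (MvPolynomial (Fin n) k) (RatFF k n))
  have hι : Function.Injective ι := by
    simpa [ι] using (algebraMap _ L).injective.comp (IsFractionRing.injective _ (RatFF k n))
  have hβ : Function.Injective fun σ : L ≃ₐ[RatFF k n] L => σ x - x :=
    sub_left_injective.comp hinj
  rcases eq_or_ne σ 1 with rfl | hσ
  · exact ⟨1, 0, by simp, by simp⟩
  obtain ⟨τ, hτ, hτσ⟩ := ENat.exists_ne_ne_of_three_le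
    (by rw [ENat.card_eq_coe_natCard]; exact_mod_cast hcard) 1 σ
  obtain ⟨a, ha⟩ := exists_algebraMap_eq_algEquiv_apply_sub hinj hsq hx σ
  obtain ⟨b, hb⟩ := exists_algebraMap_eq_algEquiv_apply_sub hinj hsq hx τ
  change ι a = _ at ha
  change ι b = _ at hb
  have ha0 : a ≠ 0 := fun h => hβ.ne hσ (by simpa [h] using ha.symm)
  have hb0 : b ≠ 0 := fun h => hβ.ne hτ (by simpa [h] using hb.symm)
  have hab0 : a + b ≠ 0 := fun h => hβ.ne hτσ.symm (by
    linear_combination (by simpa [ha, hb] using congrArg ι h : σ x - x + (τ x - x) = 0)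
      - (τ x - x) * CharTwo.two_eq_zero (R := L))
  have hq_eq : q = a * b * (a + b) := hι (by
    rw [map_mul, map_mul, map_add, ha, hb]
    exact eq_mul_mul_add_of_cubic_roots (hβ.ne hτσ.symm)
      (algEquiv_apply_sub_cubic hinj hx hσ) (algEquiv_apply_sub_cubic hinj hx hτ))
  refine ⟨1, a, totalDegree_le_one_of_totalDegree_mul_mul_add_le_three ha0 hb0 hab0
    (hq_eq ▸ hq), ?_⟩
  change σ x = ι (C 1) * x + ι a
  rw [ha, C_1, map_one, one_mul, add_sub_cancel]

theorem outer_galois_point_extendable_char_two_general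
    {k : Type u} [Field k] [CharP k 2] {n : ℕ}
    (F : ℕ → MvPolynomial (Fin (n + 1)) k)
    (hhom : ∀ i ≤ 4, (F i).IsHomogeneous i)
    (hgal : IsOuterGaloisPoint.{u, v} (totalForm 4 F) 4)
    (hklein : GalGroupKleinFour.{u, v} (totalForm 4 F) 4)
    (hF1 : F 1 = 0) :
    IsExtendableOuterGaloisPoint.{u, v} (totalForm 4 F) 4 := by
  obtain ⟨hnotmem, hgalois⟩ := hgal
  have hF0 : F 0 = C (coeff 0 (F 0)) :=
    totalDegree_eq_zero_iff_eq_C.mp (Nat.le_zero.mp (hhom 0 (by norm_num)).totalDegree_le)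
  have ha : coeff 0 (F 0) ≠ 0 := by rwa [MemAtP, eval_Ppt_totalForm hhom] at hnotmem
  have hq : (C (coeff 0 (F 0))⁻¹ * dehomogenize k n (F 3)).totalDegree ≤ 3 :=
    (totalDegree_mul _ _).trans (by
      rw [totalDegree_C, zero_add]
      exact (totalDegree_dehomogenize_le _).trans (hhom 3 (by norm_num)).totalDegree_le)
  refine ⟨hnotmem, fun L _ _ x hx hgen hrank => ?_⟩
  have hGalois := hgalois L x hx hgen hrank
  have : FiniteDimensional (RatFF k n) L := .of_finrank_eq_succ hrank
  have : CharP (RatFF k n) 2 := charP_of_injective_algebraMap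
    (IsFractionRing.injective (MvPolynomial (Fin n) k) _) 2
  have : CharP L 2 := charP_of_injective_algebraMap' (RatFF k n) 2
  obtain ⟨e⟩ := hklein L x hx hgen hrank
  have hsq (σ : L ≃ₐ[RatFF k n] L) : σ * σ = 1 := e.injective <| by
    rw [map_mul, map_one]
    exact (by decide : ∀ g : Multiplicative (ZMod 2) × Multiplicative (ZMod 2), g * g = 1) _
  have hcard : 3 ≤ Nat.card (L ≃ₐ[RatFF k n] L) := by
    rw [IsGalois.card_aut_eq_finrank, hrank]
    norm_num
  refine ⟨hGalois, (Subgroup.eq_top_iff' _).mpr fun σ => Subgroup.subset_closure ?_⟩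
  exact inducedByMatrix_of_charTwo_quartic
    (algEquiv_apply_injective_of_adjoin_simple_eq_top hgen) hsq hcard hq
    (quartic_of_aeval_projPoly_totalForm hF0 ha hF1 hx) σ

/-- **Theorem (characteristic 2: outer Galois points of quartics with Klein four Galois
group and F₁ = 0 are extendable).** -/
theorem outer_galois_point_extendable_char_two
    {k : Type u} [Field k] [IsAlgClosed k] [CharP k 2] {n : ℕ}
    (F : ℕ → MvPolynomial (Fin (n + 1)) k)
    (hhom : ∀ i ≤ 4, (F i).IsHomogeneous i)
    (hirr : Irreducible (totalForm 4 F))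
    (hgal : IsOuterGaloisPoint.{u, v} (totalForm 4 F) 4)
    (hklein : GalGroupKleinFour.{u, v} (totalForm 4 F) 4)
    (hF1 : F 1 = 0) :
    IsExtendableOuterGaloisPoint.{u, v} (totalForm 4 F) 4 :=
  outer_galois_point_extendable_char_two_general F hhom hgal hklein hF1
end
end
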